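/- Let p be a probability mass function on a finite nonempty type Q with MAP probability p* := max_{q∈Q} p(q) > 0 and min-entropy h := −log₂ p*, and let ε, δ ∈ (0,1). For every natural number m with m ≥ 2^h·log(1/δ), under the product measure P^⊗m the following event has probability at least 1−δ: the sample maximum p̂_m := max_{i<m} p(q_i) satisfies p̂_m ≥ p*·(1−ε), and consequently m ≥ (1−ε)·log(1/δ)/p̂_m. Hence with probability at least 1−δ, Algorithm 1's probabilistic stopping condition is satisfied by time ⌈2^h·log(1/δ)⌉. -/

import Mathlib

/-! The hitting event "some draw equals a MAP point `q*`" has probability `1 - (1 - p*)^m`, and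
`(1 - p*)^m ≤ exp (-m p*) ≤ δ` as soon as `m ≥ log (1/δ) / p* = 2^h log (1/δ)`. On that event
the sample maximum is already `p*`, which gives both conclusions. -/

open Finset

/-- The probability of event `E` under `m` i.i.d. draws from the pmf `p`
on a finite type `Q` (i.e., the `m`-fold product measure of `p`). -/
noncomputable def iidProb {Q : Type*} [Fintype Q] (p : Q → ℝ) (m : ℕ)
    (E : Set (Fin m → Q)) : ℝ :=
  ∑ x : Fin m → Q, E.indicator (fun y => ∏ i, p (y i)) x

/-- The maximum of `p` over a finset `S`, defined to be `0` if `S` is empty. -/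
noncomputable def sampleMax {Q : Type*} (p : Q → ℝ) (S : Finset Q) : ℝ :=
  if h : S.Nonempty then S.sup' h p else 0

/-- The sample maximum `p̂_m = max_{i<m} p (x i)` of a sample `x : Fin m → Q`. -/
noncomputable def sampleMaxVec {Q : Type*} [DecidableEq Q] (p : Q → ℝ) {m : ℕ}
    (x : Fin m → Q) : ℝ :=
  sampleMax p (Finset.image x Finset.univ)

section IidProb

variable {Q : Type*} [Fintype Q] (p : Q → ℝ) {m : ℕ}

theorem iidProb_mono (hp0 : ∀ q, 0 ≤ p q) {E F : Set (Fin m → Q)} (hEF : E ⊆ F) :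
    iidProb p m E ≤ iidProb p m F :=
  sum_le_sum fun x _ =>
    Set.indicator_le_indicator_of_subset hEF (fun y => prod_nonneg fun i _ => hp0 (y i)) x

theorem iidProb_compl (E : Set (Fin m → Q)) :
    iidProb p m Eᶜ = (∑ q, p q) ^ m - iidProb p m E := by
  rw [iidProb, iidProb, Fintype.sum_pow, eq_sub_iff_add_eq, ← sum_add_distrib]
  simp only [Set.indicator_compl_add_self_apply]

theorem iidProb_forall_mem (S : Finset Q) :
    iidProb p m {x | ∀ i, x i ∈ S} = (∑ q ∈ S, p q) ^ m := by
  have hpi : {x : Fin m → Q | ∀ i, x i ∈ S} =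
      (Fintype.piFinset fun _ : Fin m => S : Set (Fin m → Q)) := by
    ext x; simp
  rw [iidProb, sum_pow', hpi, sum_indicator_subset _ (subset_univ _)]

theorem iidProb_exists_eq (hp1 : ∑ q, p q = 1) (q : Q) :
    iidProb p m {x | ∃ i, x i = q} = 1 - (1 - p q) ^ m := by
  classical
  have hhit : {x : Fin m → Q | ∃ i, x i = q} = {x | ∀ i, x i ∈ univ.erase q}ᶜ := by
    ext x; simp
  rw [hhit, iidProb_compl, iidProb_forall_mem, sum_erase_eq_sub (mem_univ q), hp1, one_pow]

end IidProb

theorem le_sampleMaxVec {Q : Type*} [DecidableEq Q] (p : Q → ℝ) {m : ℕ} (x : Fin m → Q)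
    (i : Fin m) : p (x i) ≤ sampleMaxVec p x := by
  have hmem : x i ∈ image x univ := mem_image_of_mem x (mem_univ i)
  rw [sampleMaxVec, sampleMax, dif_pos ⟨_, hmem⟩]
  exact le_sup' p hmem

theorem one_sub_pow_le_of_log_inv_le {a δ : ℝ} {m : ℕ} (ha : a ≤ 1) (hδ : 0 < δ)
    (hm : Real.log (1 / δ) ≤ m * a) : (1 - a) ^ m ≤ δ :=
  calc (1 - a) ^ m ≤ Real.exp (-a) ^ m :=
        pow_le_pow_left₀ (sub_nonneg.2 ha) (Real.one_sub_le_exp_neg a) m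
    _ = Real.exp (-(m * a)) := by rw [← Real.exp_nat_mul, mul_neg]
    _ ≤ Real.exp (-Real.log (1 / δ)) := Real.exp_le_exp.2 (neg_le_neg hm)
    _ = δ := by rw [one_div, Real.log_inv, neg_neg, Real.exp_log hδ]

/-- stochastic upper complexity bound for Algorithm 1.
If `m ≥ 2^h·log(1/δ)` (with `h = -log₂ p*` the min-entropy), then with probability
at least `1-δ` the sample maximum satisfies `p̂_m ≥ p*(1-ε)` and consequently
the probabilistic stopping condition `m ≥ (1-ε)·log(1/δ)/p̂_m` is triggered. -/
theorem stmt6 {Q : Type*} [Fintype Q] [Nonempty Q] [DecidableEq Q] (p : Q → ℝ)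
    (hp0 : ∀ q, 0 ≤ p q) (hp1 : ∑ q, p q = 1)
    (pstar h : ℝ) (hpstar : pstar = Finset.univ.sup' Finset.univ_nonempty p)
    (hpos : 0 < pstar) (hh : h = -Real.logb 2 pstar)
    (ε δ : ℝ) (hε : ε ∈ Set.Ioo (0 : ℝ) 1) (hδ : δ ∈ Set.Ioo (0 : ℝ) 1)
    (m : ℕ) (hm : (2 : ℝ) ^ h * Real.log (1 / δ) ≤ (m : ℝ)) :
    1 - δ ≤ iidProb p m
        {x | pstar * (1 - ε) ≤ sampleMaxVec p x ∧
          (1 - ε) * Real.log (1 / δ) / sampleMaxVec p x ≤ (m : ℝ)} := by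
  obtain ⟨qs, -, hqs⟩ := exists_mem_eq_sup' univ_nonempty p
  have hpq : p qs = pstar := (hpstar.trans hqs).symm
  have hps1 : pstar ≤ 1 := hpq ▸ hp1 ▸ single_le_sum (fun q _ => hp0 q) (mem_univ qs)
  have hlogδ : 0 < Real.log (1 / δ) := Real.log_pos (one_lt_one_div hδ.1 hδ.2)
  have hmp : Real.log (1 / δ) ≤ m * pstar := by
    rw [hh, Real.rpow_neg zero_le_two, Real.rpow_logb two_pos (by norm_num) hpos] at hm
    rwa [inv_mul_le_iff₀ hpos, mul_comm] at hm
  have hsub : {x : Fin m → Q | ∃ i, x i = qs} ⊆ {x | pstar * (1 - ε) ≤ sampleMaxVec p x ∧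
      (1 - ε) * Real.log (1 / δ) / sampleMaxVec p x ≤ (m : ℝ)} := by
    rintro x ⟨i, hi⟩
    have hge : pstar ≤ sampleMaxVec p x := hpq ▸ hi ▸ le_sampleMaxVec p x i
    refine ⟨le_trans (mul_le_of_le_one_right hpos.le (by linarith [hε.1])) hge, ?_⟩
    rw [div_le_iff₀ (hpos.trans_le hge)]
    calc (1 - ε) * Real.log (1 / δ) ≤ Real.log (1 / δ) :=
          mul_le_of_le_one_left hlogδ.le (by linarith [hε.1])
      _ ≤ m * pstar := hmp
      _ ≤ m * sampleMaxVec p x := by gcongr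
  calc 1 - δ ≤ 1 - (1 - pstar) ^ m := by
        linarith [one_sub_pow_le_of_log_inv_le hps1 hδ.1 hmp]
    _ = iidProb p m {x | ∃ i, x i = qs} := by rw [iidProb_exists_eq p hp1, hpq]
    _ ≤ _ := iidProb_mono p hp0 hsub
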